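/- Every rank-2 locally free sheaf over a deformation quantization 𝒵_k(σ) is an extension of line bundles: any transition matrix T = T₀ + Σ Tₙℏⁿ whose classical limit T₀ is equivalent to an upper-triangular matrix diag-type (z^{j₁}, b₀; 0, z^{j₂}) with j₁ ≥ j₂ can be brought by ⋆-invertible coordinate changes to the form (z^{j₁}, b₀ + O(ℏ); 0, z^{j₂}), using at each order the vanishing of H¹(Z_k, O(j₁ - j₂)). -/

import Mathlib

/- STATEMENT 14: Every rank-2 locally free sheaf over a deformation quantization
𝒵_k(σ) is an extension of line bundles: a transition matrix T = T₀ + Σ Tₙℏⁿ whose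
classical limit is the upper-triangular matrix (z^{j₁}, b₀; 0, z^{j₂}) with j₁ ≥ j₂
can be brought by ⋆-invertible coordinate changes A_V ⋆ T ⋆ A_U (A_U with entries
holomorphic on U, A_V on V, classical limits the identity) to the form
(z^{j₁}, b₀ + O(ℏ); 0, z^{j₂}), using at each order the vanishing of
H¹(Z_k, O(j₁ - j₂)). -/

noncomputable section

abbrev Lk : Type := AddMonoidAlgebra ℂ (ℤ × ℕ)

def mono (l : ℤ) (i : ℕ) : Lk := AddMonoidAlgebra.single (l, i) (1 : ℂ)

def OU : Submodule ℂ Lk :=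
  Submodule.span ℂ {x : Lk | ∃ l i : ℕ, x = mono l i}

def OV (k : ℕ) : Submodule ℂ Lk :=
  Submodule.span ℂ {x : Lk | ∃ (l : ℤ) (i : ℕ), l ≤ k * i ∧ x = mono l i}

/-- Star product of matrix-valued `ℏ`-power series. -/
def matStar (B : ℕ → Lk →ₗ[ℂ] Lk →ₗ[ℂ] Lk)
    (X Y : ℕ → Matrix (Fin 2) (Fin 2) Lk) : ℕ → Matrix (Fin 2) (Fin 2) Lk :=
  fun N => ∑ t ∈ Finset.HasAntidiagonal.antidiagonal N, ∑ ab ∈ Finset.HasAntidiagonal.antidiagonal t.2,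
    Matrix.of fun i j => ∑ l : Fin 2, B t.1 (X ab.1 i l) (Y ab.2 l j)

namespace RT

abbrev Mat := Matrix (Fin 2) (Fin 2) Lk

/-! ### Splitting of Laurent-type elements -/

def shiftL (m : ℤ) (w : Lk) : Lk :=
  AddMonoidAlgebra.ofCoeff (Finsupp.mapDomain (fun p : ℤ × ℕ => (p.1 - m, p.2)) w.coeff)

open Classical in
def s2L (m₁ m₂ : ℤ) (w : Lk) : Lk := shiftL m₁ (AddMonoidAlgebra.ofCoeff (Finsupp.filter (fun p : ℤ × ℕ => p.1 < m₂) w.coeff))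
open Classical in
def s2R (m₁ m₂ : ℤ) (w : Lk) : Lk := shiftL m₂ (AddMonoidAlgebra.ofCoeff (Finsupp.filter (fun p : ℤ × ℕ => ¬ p.1 < m₂) w.coeff))

lemma mul_mono (x : Lk) (m : ℤ) :
    x * mono m 0 = AddMonoidAlgebra.ofCoeff
      (Finsupp.mapDomain (fun p : ℤ × ℕ => (p.1 + m, p.2)) x.coeff) := by
  induction x using AddMonoidAlgebra.induction_linear with
  | zero => simp [Finsupp.mapDomain_zero]
  | add f g hf hg => rw [add_mul, hf, hg, AddMonoidAlgebra.coeff_add, Finsupp.mapDomain_add,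
      AddMonoidAlgebra.ofCoeff_add]
  | single a b =>
    rw [mono]
    rw [AddMonoidAlgebra.single_mul_single, AddMonoidAlgebra.coeff_single,
      Finsupp.mapDomain_single, AddMonoidAlgebra.ofCoeff_single]
    have h2 : a + ((m : ℤ), (0:ℕ)) = (a.1 + m, a.2) := by ext <;> simp
    rw [h2, mul_one]

lemma mono_mul (m : ℤ) (x : Lk) :
    mono m 0 * x = AddMonoidAlgebra.ofCoeff
      (Finsupp.mapDomain (fun p : ℤ × ℕ => (p.1 + m, p.2)) x.coeff) := by
  induction x using AddMonoidAlgebra.induction_linear with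
  | zero => simp [Finsupp.mapDomain_zero]
  | add f g hf hg => rw [mul_add, hf, hg, AddMonoidAlgebra.coeff_add, Finsupp.mapDomain_add,
      AddMonoidAlgebra.ofCoeff_add]
  | single a b =>
    rw [mono]
    rw [AddMonoidAlgebra.single_mul_single, AddMonoidAlgebra.coeff_single,
      Finsupp.mapDomain_single, AddMonoidAlgebra.ofCoeff_single]
    have h2 : ((m, 0) : ℤ × ℕ) + a = (a.1 + m, a.2) := by ext <;> simp [add_comm]
    rw [h2, one_mul]

lemma shift_back (m : ℤ) (w : Lk) :
    AddMonoidAlgebra.ofCoeff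
      (Finsupp.mapDomain (fun p : ℤ × ℕ => (p.1 + m, p.2)) (shiftL m w).coeff) = w := by
  rw [shiftL, AddMonoidAlgebra.coeff_ofCoeff, ← Finsupp.mapDomain_comp]
  have : ((fun p : ℤ × ℕ => (p.1 + m, p.2)) ∘ (fun p : ℤ × ℕ => (p.1 - m, p.2))) = id := by
    funext p; simp
  rw [this, Finsupp.mapDomain_id, AddMonoidAlgebra.ofCoeff_coeff]

open Classical in
lemma s2_spec (m₁ m₂ : ℤ) (w : Lk) :
    s2L m₁ m₂ w * mono m₁ 0 + mono m₂ 0 * s2R m₁ m₂ w = w := by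
  rw [s2L, s2R, mul_mono, mono_mul, shift_back, shift_back,
    ← AddMonoidAlgebra.ofCoeff_add, Finsupp.filter_pos_add_filter_neg,
    AddMonoidAlgebra.ofCoeff_coeff]

open Classical in
lemma s2L_mem (k : ℕ) (m₁ m₂ : ℤ) (h : m₂ ≤ m₁) (w : Lk) : s2L m₁ m₂ w ∈ OV k := by
  classical
  have hsupp : ∀ p ∈ (s2L m₁ m₂ w).coeff.support, (p.1 : ℤ) ≤ k * p.2 := by
    intro p hp
    have := Finsupp.mapDomain_support (f := fun p : ℤ × ℕ => (p.1 - m₁, p.2))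
      (s := Finsupp.filter (fun p : ℤ × ℕ => p.1 < m₂) w.coeff) hp
    simp only [Finset.mem_image, Finsupp.support_filter, Finset.mem_filter] at this
    obtain ⟨q, ⟨-, hq2⟩, rfl⟩ := this
    have h3 : (0:ℤ) ≤ (k:ℤ) * q.2 := by positivity
    simp only
    omega
  rw [← AddMonoidAlgebra.ofCoeff_coeff (s2L m₁ m₂ w)]
  rw [← Finsupp.sum_single (s2L m₁ m₂ w).coeff, AddMonoidAlgebra.ofCoeff_finsuppSum]
  refine Submodule.finsuppSum_mem _ _ _ _ ?_
  intro p hp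
  have h1 : AddMonoidAlgebra.ofCoeff (Finsupp.single p ((s2L m₁ m₂ w).coeff p))
      = (s2L m₁ m₂ w).coeff p • mono p.1 p.2 := by
    rw [mono, ← AddMonoidAlgebra.ofCoeff_single, ← AddMonoidAlgebra.ofCoeff_smul]
    rw [Finsupp.smul_single, smul_eq_mul, mul_one]
  beta_reduce
  rw [h1]
  refine Submodule.smul_mem _ _ (Submodule.subset_span ?_)
  exact ⟨p.1, p.2, hsupp p (Finsupp.mem_support_iff.mpr hp), rfl⟩

open Classical in
lemma s2R_mem (m₁ m₂ : ℤ) (w : Lk) : s2R m₁ m₂ w ∈ OU := by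
  classical
  have hsupp : ∀ p ∈ (s2R m₁ m₂ w).coeff.support, (0:ℤ) ≤ p.1 := by
    intro p hp
    have := Finsupp.mapDomain_support (f := fun p : ℤ × ℕ => (p.1 - m₂, p.2))
      (s := Finsupp.filter (fun p : ℤ × ℕ => ¬ p.1 < m₂) w.coeff) hp
    simp only [Finset.mem_image, Finsupp.support_filter, Finset.mem_filter] at this
    obtain ⟨q, ⟨-, hq2⟩, rfl⟩ := this
    simp only
    omega
  rw [← AddMonoidAlgebra.ofCoeff_coeff (s2R m₁ m₂ w)]
  rw [← Finsupp.sum_single (s2R m₁ m₂ w).coeff, AddMonoidAlgebra.ofCoeff_finsuppSum]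
  refine Submodule.finsuppSum_mem _ _ _ _ ?_
  intro p hp
  have h1 : AddMonoidAlgebra.ofCoeff (Finsupp.single p ((s2R m₁ m₂ w).coeff p))
      = (s2R m₁ m₂ w).coeff p • mono p.1 p.2 := by
    rw [mono, ← AddMonoidAlgebra.ofCoeff_single, ← AddMonoidAlgebra.ofCoeff_smul]
    rw [Finsupp.smul_single, smul_eq_mul, mul_one]
  beta_reduce
  rw [h1]
  refine Submodule.smul_mem _ _ (Submodule.subset_span ?_)
  have h0 := hsupp p (Finsupp.mem_support_iff.mpr hp)
  refine ⟨p.1.toNat, p.2, ?_⟩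
  have hh : ((p.1.toNat : ℤ)) = p.1 := Int.toNat_of_nonneg h0
  rw [mono, mono, hh]

lemma one_mem_OU : (1 : Lk) ∈ OU := by
  refine Submodule.subset_span ⟨0, 0, ?_⟩
  rw [mono]; rfl

lemma one_mem_OV (k : ℕ) : (1 : Lk) ∈ OV k := by
  refine Submodule.subset_span ⟨0, 0, by simp, ?_⟩
  rw [mono]; rfl

/-! ### matStar lemmas -/

variable (B : ℕ → Lk →ₗ[ℂ] Lk →ₗ[ℂ] Lk)

lemma matStar_zero (hB0 : ∀ x y : Lk, B 0 x y = x * y) (X Y : ℕ → Mat) :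
    matStar B X Y 0 = X 0 * Y 0 := by
  funext i j
  simp [matStar, hB0, Matrix.mul_apply, Fin.sum_univ_two]

lemma matStar_left_of (hB0 : ∀ x y : Lk, B 0 x y = x * y) (N : ℕ) (X Y : ℕ → Mat)
    (h : ∀ a < N, X a = 0) : matStar B X Y N = X N * Y 0 := by
  rw [matStar]
  rw [Finset.sum_eq_single ((0:ℕ), N)]
  · rw [Finset.sum_eq_single ((N:ℕ), (0:ℕ))]
    · funext i j; simp [hB0, Matrix.mul_apply, Fin.sum_univ_two]
    · intro ab hab hne
      have hm := Finset.HasAntidiagonal.mem_antidiagonal.mp hab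
      have h1 : ab.1 < N := by
        rcases Nat.lt_or_ge ab.1 N with h' | h'
        · exact h'
        · exfalso; apply hne; have : ab.1 = N := by omega
          exact Prod.ext this (by omega)
      rw [h ab.1 h1]
      funext i j; simp
    · intro h'; exact absurd (Finset.HasAntidiagonal.mem_antidiagonal.mpr (by omega)) h'
  · intro t ht hne
    have hm := Finset.HasAntidiagonal.mem_antidiagonal.mp ht
    have h2 : t.2 < N := by
      rcases Nat.lt_or_ge t.2 N with h' | h'
      · exact h'
      · exfalso; apply hne; exact Prod.ext (by omega) (by omega)
    apply Finset.sum_eq_zero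
    intro ab hab
    have hm2 := Finset.HasAntidiagonal.mem_antidiagonal.mp hab
    rw [h ab.1 (by omega)]
    funext i j; simp
  · intro h'; exact absurd (Finset.HasAntidiagonal.mem_antidiagonal.mpr (by omega)) h'

lemma matStar_right_of (hB0 : ∀ x y : Lk, B 0 x y = x * y) (N : ℕ) (X Y : ℕ → Mat)
    (h : ∀ d < N, Y d = 0) : matStar B X Y N = X 0 * Y N := by
  rw [matStar]
  rw [Finset.sum_eq_single ((0:ℕ), N)]
  · rw [Finset.sum_eq_single ((0:ℕ), N)]
    · funext i j; simp [hB0, Matrix.mul_apply, Fin.sum_univ_two]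
    · intro ab hab hne
      have hm := Finset.HasAntidiagonal.mem_antidiagonal.mp hab
      have h1 : ab.2 < N := by
        rcases Nat.lt_or_ge ab.2 N with h' | h'
        · exact h'
        · exfalso; apply hne; exact Prod.ext (by omega) (by omega)
      rw [h ab.2 h1]
      funext i j; simp
    · intro h'; exact absurd (Finset.HasAntidiagonal.mem_antidiagonal.mpr (by omega)) h'
  · intro t ht hne
    have hm := Finset.HasAntidiagonal.mem_antidiagonal.mp ht
    have h2 : t.2 < N := by
      rcases Nat.lt_or_ge t.2 N with h' | h'
      · exact h'
      · exfalso; apply hne; exact Prod.ext (by omega) (by omega)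
    apply Finset.sum_eq_zero
    intro ab hab
    have hm2 := Finset.HasAntidiagonal.mem_antidiagonal.mp hab
    rw [h ab.2 (by omega)]
    funext i j; simp
  · intro h'; exact absurd (Finset.HasAntidiagonal.mem_antidiagonal.mpr (by omega)) h'

lemma matStar_add_left (X X' Y : ℕ → Mat) (N : ℕ) :
    matStar B (fun n => X n + X' n) Y N = matStar B X Y N + matStar B X' Y N := by
  funext i j
  simp only [matStar, Matrix.sum_apply, Matrix.of_apply, Matrix.add_apply, map_add,
    LinearMap.add_apply, Finset.sum_add_distrib]

lemma matStar_add_right (X Y Y' : ℕ → Mat) (N : ℕ) :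
    matStar B X (fun n => Y n + Y' n) N = matStar B X Y N + matStar B X Y' N := by
  funext i j
  simp only [matStar, Matrix.sum_apply, Matrix.of_apply, Matrix.add_apply, map_add,
    LinearMap.add_apply, Finset.sum_add_distrib]

lemma matStar_congr_left (n : ℕ) (X X' Y : ℕ → Mat) (h : ∀ a ≤ n, X a = X' a) :
    matStar B X Y n = matStar B X' Y n := by
  rw [matStar, matStar]
  refine Finset.sum_congr rfl fun t ht => Finset.sum_congr rfl fun ab hab => ?_
  have hm := Finset.HasAntidiagonal.mem_antidiagonal.mp ht
  have hm2 := Finset.HasAntidiagonal.mem_antidiagonal.mp hab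
  rw [h ab.1 (by omega)]

lemma matStar_congr_right (n : ℕ) (X Y Y' : ℕ → Mat) (h : ∀ d ≤ n, Y d = Y' d) :
    matStar B X Y n = matStar B X Y' n := by
  rw [matStar, matStar]
  refine Finset.sum_congr rfl fun t ht => Finset.sum_congr rfl fun ab hab => ?_
  have hm := Finset.HasAntidiagonal.mem_antidiagonal.mp ht
  have hm2 := Finset.HasAntidiagonal.mem_antidiagonal.mp hab
  rw [h ab.2 (by omega)]

/-! ### The solving matrices -/

def T0mat (j₁ j₂ : ℤ) (b₀ : Lk) : Mat := Matrix.of ![![mono j₁ 0, b₀], ![0, mono j₂ 0]]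

def solV (j₁ j₂ : ℤ) (b₀ : Lk) (R : Mat) : Mat :=
  Matrix.of ![![s2L j₁ j₁ (-(R 0 0) - b₀ * s2R j₁ j₂ (-(R 1 0))), 0],
              ![s2L j₁ j₂ (-(R 1 0)), s2L j₂ j₂ (-(R 1 1) - s2L j₁ j₂ (-(R 1 0)) * b₀)]]

def solU (j₁ j₂ : ℤ) (b₀ : Lk) (R : Mat) : Mat :=
  Matrix.of ![![s2R j₁ j₁ (-(R 0 0) - b₀ * s2R j₁ j₂ (-(R 1 0))), 0],
              ![s2R j₁ j₂ (-(R 1 0)), s2R j₂ j₂ (-(R 1 1) - s2L j₁ j₂ (-(R 1 0)) * b₀)]]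

lemma key00 (j₁ j₂ : ℤ) (b₀ : Lk) (R : Mat) :
    (solV j₁ j₂ b₀ R * T0mat j₁ j₂ b₀ + T0mat j₁ j₂ b₀ * solU j₁ j₂ b₀ R) 0 0
      = -(R 0 0) := by
  have h1 := s2_spec j₁ j₁ (-(R 0 0) - b₀ * s2R j₁ j₂ (-(R 1 0)))
  simp only [solV, solU, T0mat, Matrix.add_apply, Matrix.mul_apply, Fin.sum_univ_two,
    Matrix.of_apply, Matrix.cons_val', Matrix.cons_val_zero, Matrix.cons_val_one,
    Matrix.head_cons, Matrix.empty_val', Matrix.cons_val_fin_one, Matrix.head_fin_const]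
  linear_combination h1

lemma key10 (j₁ j₂ : ℤ) (b₀ : Lk) (R : Mat) :
    (solV j₁ j₂ b₀ R * T0mat j₁ j₂ b₀ + T0mat j₁ j₂ b₀ * solU j₁ j₂ b₀ R) 1 0
      = -(R 1 0) := by
  have h1 := s2_spec j₁ j₂ (-(R 1 0))
  simp only [solV, solU, T0mat, Matrix.add_apply, Matrix.mul_apply, Fin.sum_univ_two,
    Matrix.of_apply, Matrix.cons_val', Matrix.cons_val_zero, Matrix.cons_val_one,
    Matrix.head_cons, Matrix.empty_val', Matrix.cons_val_fin_one, Matrix.head_fin_const]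
  linear_combination h1

lemma key11 (j₁ j₂ : ℤ) (b₀ : Lk) (R : Mat) :
    (solV j₁ j₂ b₀ R * T0mat j₁ j₂ b₀ + T0mat j₁ j₂ b₀ * solU j₁ j₂ b₀ R) 1 1
      = -(R 1 1) := by
  have h1 := s2_spec j₂ j₂ (-(R 1 1) - s2L j₁ j₂ (-(R 1 0)) * b₀)
  simp only [solV, solU, T0mat, Matrix.add_apply, Matrix.mul_apply, Fin.sum_univ_two,
    Matrix.of_apply, Matrix.cons_val', Matrix.cons_val_zero, Matrix.cons_val_one,
    Matrix.head_cons, Matrix.empty_val', Matrix.cons_val_fin_one, Matrix.head_fin_const]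
  linear_combination h1


lemma solV_mem (k : ℕ) (j₁ j₂ : ℤ) (hj : j₂ ≤ j₁) (b₀ : Lk) (R : Mat) (i j : Fin 2) :
    solV j₁ j₂ b₀ R i j ∈ OV k := by
  fin_cases i <;> fin_cases j <;>
    simp only [solV, Fin.zero_eta, Fin.mk_one, Fin.isValue, Matrix.of_apply, Matrix.cons_val',
      Matrix.cons_val_zero, Matrix.cons_val_one, Matrix.head_cons, Matrix.empty_val',
      Matrix.cons_val_fin_one, Matrix.head_fin_const] <;>
    first
      | exact s2L_mem k _ _ le_rfl _
      | exact s2L_mem k _ _ hj _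
      | exact Submodule.zero_mem _

lemma solU_mem (j₁ j₂ : ℤ) (b₀ : Lk) (R : Mat) (i j : Fin 2) :
    solU j₁ j₂ b₀ R i j ∈ OU := by
  fin_cases i <;> fin_cases j <;>
    simp only [solU, Fin.zero_eta, Fin.mk_one, Fin.isValue, Matrix.of_apply, Matrix.cons_val',
      Matrix.cons_val_zero, Matrix.cons_val_one, Matrix.head_cons, Matrix.empty_val',
      Matrix.cons_val_fin_one, Matrix.head_fin_const] <;>
    first
      | exact s2R_mem _ _ _
      | exact Submodule.zero_mem _

/-! ### The recursive construction -/

variable (T : ℕ → Mat)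

def seq (j₁ j₂ : ℤ) (b₀ : Lk) : ℕ → Mat × Mat
  | 0 => (1, 1)
  | (N+1) =>
    let prevV : ℕ → Mat := fun m => if _h : m < N+1 then (seq j₁ j₂ b₀ m).1 else 0
    let prevU : ℕ → Mat := fun m => if _h : m < N+1 then (seq j₁ j₂ b₀ m).2 else 0
    let R := matStar B (matStar B prevV T) prevU (N+1)
    (solV j₁ j₂ b₀ R, solU j₁ j₂ b₀ R)

def AVf (j₁ j₂ : ℤ) (b₀ : Lk) (n : ℕ) : Mat := (seq B T j₁ j₂ b₀ n).1
def AUf (j₁ j₂ : ℤ) (b₀ : Lk) (n : ℕ) : Mat := (seq B T j₁ j₂ b₀ n).2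

def Rm (j₁ j₂ : ℤ) (b₀ : Lk) (n : ℕ) : Mat :=
  matStar B (matStar B (fun m => if _h : m < n then (seq B T j₁ j₂ b₀ m).1 else 0) T)
    (fun m => if _h : m < n then (seq B T j₁ j₂ b₀ m).2 else 0) n

lemma seq_zero (j₁ j₂ : ℤ) (b₀ : Lk) : seq B T j₁ j₂ b₀ 0 = (1, 1) := by rw [seq]

lemma AVf_zero (j₁ j₂ : ℤ) (b₀ : Lk) : AVf B T j₁ j₂ b₀ 0 = 1 := by
  rw [AVf, seq_zero]

lemma AUf_zero (j₁ j₂ : ℤ) (b₀ : Lk) : AUf B T j₁ j₂ b₀ 0 = 1 := by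
  rw [AUf, seq_zero]

lemma AVf_succ (j₁ j₂ : ℤ) (b₀ : Lk) (N : ℕ) :
    AVf B T j₁ j₂ b₀ (N+1) = solV j₁ j₂ b₀ (Rm B T j₁ j₂ b₀ (N+1)) := by
  rw [AVf, seq, Rm]

lemma AUf_succ (j₁ j₂ : ℤ) (b₀ : Lk) (N : ℕ) :
    AUf B T j₁ j₂ b₀ (N+1) = solU j₁ j₂ b₀ (Rm B T j₁ j₂ b₀ (N+1)) := by
  rw [AUf, seq, Rm]

/-- The fundamental order-by-order decomposition. -/
lemma main_step (hB0 : ∀ x y : Lk, B 0 x y = x * y) (j₁ j₂ : ℤ) (b₀ : Lk)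
    (hT0 : T 0 = T0mat j₁ j₂ b₀) (N : ℕ) :
    matStar B (matStar B (AVf B T j₁ j₂ b₀) T) (AUf B T j₁ j₂ b₀) (N+1)
      = AVf B T j₁ j₂ b₀ (N+1) * T0mat j₁ j₂ b₀
        + T0mat j₁ j₂ b₀ * AUf B T j₁ j₂ b₀ (N+1)
        + Rm B T j₁ j₂ b₀ (N+1) := by
  classical
  set n := N + 1 with hn
  set AV := AVf B T j₁ j₂ b₀ with hAV
  set AU := AUf B T j₁ j₂ b₀ with hAU
  set AV' : ℕ → Mat := fun a => if a = n then 0 else AV a with hAV'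
  set δV : ℕ → Mat := fun a => if a = n then AV n else 0 with hδV
  set AU' : ℕ → Mat := fun a => if a = n then 0 else AU a with hAU'
  set δU : ℕ → Mat := fun a => if a = n then AU n else 0 with hδU
  have hVsplit : AV = fun a => AV' a + δV a := by
    funext a; by_cases h : a = n <;> simp [hAV', hδV, h]
  have hUsplit : AU = fun a => AU' a + δU a := by
    funext a; by_cases h : a = n <;> simp [hAU', hδU, h]
  -- inner splitting
  have hInner : matStar B AV T = fun c => matStar B AV' T c + matStar B δV T c := by
    rw [hVsplit]; funext c; exact matStar_add_left B AV' δV T c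
  rw [hInner]
  rw [matStar_add_left B (matStar B AV' T) (matStar B δV T) AU n]
  -- δV-term
  have hδVlow : ∀ c < n, matStar B δV T c = 0 := by
    intro c hc
    rw [matStar_left_of B hB0 c δV T (fun a ha => by simp [hδV]; omega)]
    simp [hδV]
    intro hcn; omega
  have hδVtop : matStar B δV T n = AV n * T 0 := by
    rw [matStar_left_of B hB0 n δV T (fun a ha => by simp [hδV]; omega)]
    simp [hδV]
  have hterm3 : matStar B (matStar B δV T) AU n = AV n * T0mat j₁ j₂ b₀ := by
    rw [matStar_left_of B hB0 n (matStar B δV T) AU hδVlow, hδVtop]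
    have : AU 0 = 1 := AUf_zero B T j₁ j₂ b₀
    rw [this, mul_one, hT0]
  rw [hterm3]
  -- AU splitting of the AV'-term
  have hOuter : matStar B (matStar B AV' T) AU n
      = matStar B (matStar B AV' T) AU' n + matStar B (matStar B AV' T) δU n := by
    rw [hUsplit]
    exact matStar_add_right B (matStar B AV' T) AU' δU n
  rw [hOuter]
  -- δU-term
  have hterm2 : matStar B (matStar B AV' T) δU n = T0mat j₁ j₂ b₀ * AU n := by
    rw [matStar_right_of B hB0 n (matStar B AV' T) δU (fun d hd => by simp [hδU]; omega)]
    rw [matStar_zero B hB0]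
    have h1 : AV' 0 = 1 := by
      have : (0:ℕ) ≠ n := by omega
      simp [hAV', this]
      exact AVf_zero B T j₁ j₂ b₀
    rw [h1, one_mul, hT0]
    simp [hδU]
  rw [hterm2]
  -- remainder term
  have hrem : matStar B (matStar B AV' T) AU' n = Rm B T j₁ j₂ b₀ n := by
    rw [Rm]
    have hseqV : ∀ c ≤ n, matStar B AV' T c
        = matStar B (fun m => if _h : m < n then (seq B T j₁ j₂ b₀ m).1 else 0) T c := by
      intro c hc
      refine matStar_congr_left B c _ _ T (fun a ha => ?_)
      by_cases h : a = n
      · simp [hAV', h]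
      · have hlt : a < n := by omega
        simp [hAV', h, hlt, hAV, AVf]
    have h2 : matStar B (matStar B AV' T) AU' n
        = matStar B (matStar B (fun m => if _h : m < n then (seq B T j₁ j₂ b₀ m).1 else 0) T) AU' n :=
      matStar_congr_left B n _ _ AU' hseqV
    rw [h2]
    refine matStar_congr_right B n _ _ _ (fun d hd => ?_)
    by_cases h : d = n
    · simp [hAU', h]
    · have hlt : d < n := by omega
      simp [hAU', h, hlt, hAU, AUf]
  rw [hrem]
  abel

end RT

theorem rank_two_filtrable (k : ℕ) (hk : 1 ≤ k)
    (B : ℕ → Lk →ₗ[ℂ] Lk →ₗ[ℂ] Lk)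
    (hB0 : ∀ x y : Lk, B 0 x y = x * y)
    (hBU : ∀ (n : ℕ) (x y : Lk), x ∈ OU → y ∈ OU → B n x y ∈ OU)
    (hBV : ∀ (n : ℕ) (x y : Lk), x ∈ OV k → y ∈ OV k → B n x y ∈ OV k)
    (j₁ j₂ : ℤ) (hj : j₂ ≤ j₁) (b₀ : Lk)
    (T : ℕ → Matrix (Fin 2) (Fin 2) Lk)
    (hT0 : T 0 = Matrix.of ![![mono j₁ 0, b₀], ![0, mono j₂ 0]]) :
    ∃ AV AU : ℕ → Matrix (Fin 2) (Fin 2) Lk,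
      AV 0 = 1 ∧ AU 0 = 1
      ∧ (∀ n i j, AU n i j ∈ OU) ∧ (∀ n i j, AV n i j ∈ OV k)
      ∧ (∀ N : ℕ,
          matStar B (matStar B AV T) AU N 0 0 = (if N = 0 then mono j₁ 0 else 0)
          ∧ matStar B (matStar B AV T) AU N 1 0 = 0
          ∧ matStar B (matStar B AV T) AU N 1 1 = (if N = 0 then mono j₂ 0 else 0))
      ∧ matStar B (matStar B AV T) AU 0 0 1 = b₀ := by
  classical
  have hT0' : T 0 = RT.T0mat j₁ j₂ b₀ := hT0
  refine ⟨RT.AVf B T j₁ j₂ b₀, RT.AUf B T j₁ j₂ b₀,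
    RT.AVf_zero B T j₁ j₂ b₀, RT.AUf_zero B T j₁ j₂ b₀, ?_, ?_, ?_, ?_⟩
  · intro n i j
    cases n with
    | zero =>
      rw [RT.AUf_zero]
      by_cases h : i = j
      · simp only [Matrix.one_apply, h, if_pos rfl, if_true]
        exact RT.one_mem_OU
      · simp only [Matrix.one_apply, h, if_false, if_neg h]
        exact Submodule.zero_mem _
    | succ N =>
      rw [RT.AUf_succ]
      exact RT.solU_mem j₁ j₂ b₀ _ i j
  · intro n i j
    cases n with
    | zero =>
      rw [RT.AVf_zero]
      by_cases h : i = j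
      · simp only [Matrix.one_apply, h, if_pos rfl, if_true]
        exact RT.one_mem_OV k
      · simp only [Matrix.one_apply, h, if_false, if_neg h]
        exact Submodule.zero_mem _
    | succ N =>
      rw [RT.AVf_succ]
      exact RT.solV_mem k j₁ j₂ hj b₀ _ i j
  · intro N
    cases N with
    | zero =>
      have h0 : matStar B (matStar B (RT.AVf B T j₁ j₂ b₀) T) (RT.AUf B T j₁ j₂ b₀) 0
          = RT.T0mat j₁ j₂ b₀ := by
        rw [RT.matStar_zero B hB0, RT.matStar_zero B hB0, RT.AVf_zero, RT.AUf_zero,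
          one_mul, mul_one, hT0']
      refine ⟨?_, ?_, ?_⟩ <;> rw [h0] <;>
        simp [RT.T0mat, Matrix.cons_val_zero, Matrix.cons_val_one, Matrix.head_cons]
    | succ N =>
      have hm := RT.main_step B T hB0 j₁ j₂ b₀ hT0' N
      have h00 := RT.key00 j₁ j₂ b₀ (RT.Rm B T j₁ j₂ b₀ (N+1))
      have h10 := RT.key10 j₁ j₂ b₀ (RT.Rm B T j₁ j₂ b₀ (N+1))
      have h11 := RT.key11 j₁ j₂ b₀ (RT.Rm B T j₁ j₂ b₀ (N+1))
      rw [RT.AVf_succ, RT.AUf_succ] at hm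
      simp only [Matrix.add_apply] at h00 h10 h11
      refine ⟨?_, ?_, ?_⟩ <;> rw [hm] <;>
        simp only [Matrix.add_apply, Nat.succ_ne_zero, if_false, if_neg (Nat.succ_ne_zero N)] <;>
        [linear_combination h00; linear_combination h10; linear_combination h11]
  · have h0 : matStar B (matStar B (RT.AVf B T j₁ j₂ b₀) T) (RT.AUf B T j₁ j₂ b₀) 0
        = RT.T0mat j₁ j₂ b₀ := by
      rw [RT.matStar_zero B hB0, RT.matStar_zero B hB0, RT.AVf_zero, RT.AUf_zero,
        one_mul, mul_one, hT0']
    rw [h0]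
    simp [RT.T0mat, Matrix.cons_val_zero, Matrix.cons_val_one, Matrix.head_cons]
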